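/- arXiv:1410.2305 — 2 statements merged into one kernel-verified Lean document; each statement's English description precedes it below -/
import Mathlib

section
/- Let S be a closed operator on X with 0 ∈ ρ(S), and let A₁, A₂ be bounded linear operators on X satisfying A₁ + A₂ = S⁻², A₁A₂ = A₂A₁ = 0, and AⱼS⁻¹ = S⁻¹Aⱼ for j = 1, 2. Then the operators Pⱼ defined by D(Pⱼ) = {x ∈ X : Aⱼx ∈ D(S²)} and Pⱼx = S²Aⱼx (j = 1, 2) are closed complementary projections; moreover D(S²) ⊆ D(P₁) = D(P₂) and Pⱼx = AⱼS²x for every x ∈ D(S²). -/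
open Complex MeasureTheory Set Filter

noncomputable section

variable {E : Type*} [NormedAddCommGroup E] [NormedSpace ℂ E]

/-- `R : E →L[ℂ] E` is the (everywhere defined, bounded) inverse of `S - lam`. -/
def IsResolventAt (S : E →ₗ.[ℂ] E) (lam : ℂ) (R : E →L[ℂ] E) : Prop :=
  (∀ x, R x ∈ S.domain) ∧
  (∀ x : S.domain, R (S x - lam • (x : E)) = (x : E)) ∧
  (∀ (x : E) (hx : R x ∈ S.domain), S ⟨R x, hx⟩ - lam • R x = x)

/-- The resolvent set of the (possibly unbounded, not densely defined) operator `S`. -/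
def resolvSet (S : E →ₗ.[ℂ] E) : Set ℂ := {lam | ∃ R, IsResolventAt S lam R}

/-- The spectrum of `S`. -/
def pSpectrum (S : E →ₗ.[ℂ] E) : Set ℂ := (resolvSet S)ᶜ

-- The resolvent `(S - lam)⁻¹` of `S` at `lam` (junk value `0` if `lam ∉ ρ(S)`).
open Classical in
def res (S : E →ₗ.[ℂ] E) (lam : ℂ) : E →L[ℂ] E :=
  if h : ∃ R, IsResolventAt S lam R then h.choose else 0

/-- Condition (H): the strip `|Re lam| ≤ h` consists of resolvent points
and the resolvent is bounded by `M` there. -/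
def CondH (S : E →ₗ.[ℂ] E) (h M : ℝ) : Prop :=
  0 < h ∧ ∀ lam : ℂ, |lam.re| ≤ h → lam ∈ resolvSet S ∧ ‖res S lam‖ ≤ M

/-- The set of `x` such that the local resolvent `lam ↦ (S - lam)⁻¹ x` has a bounded analytic
extension to (a neighbourhood of) `H`; it is a linear subspace of `E`. -/
def Gsub (S : E →ₗ.[ℂ] E) (H : Set ℂ) : Submodule ℂ E where
  carrier := {x | ∃ φ : ℂ → E,
    (∃ U, IsOpen U ∧ H ⊆ U ∧ DifferentiableOn ℂ φ U) ∧
    (∃ C : ℝ, ∀ z ∈ H, ‖φ z‖ ≤ C) ∧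
    (∀ t : ℝ, φ ((t : ℂ) * Complex.I) = res S ((t : ℂ) * Complex.I) x)}
  zero_mem' := ⟨0, ⟨univ, isOpen_univ, subset_univ _, differentiableOn_const 0⟩,
    ⟨0, fun z _ => by simp⟩, fun t => by simp⟩
  add_mem' := by
    rintro a b ⟨φ, ⟨U, hU, hHU, hdU⟩, ⟨C, hC⟩, hφ⟩ ⟨ψ, ⟨V, hV, hHV, hdV⟩, ⟨D, hD⟩, hψ⟩
    refine ⟨φ + ψ, ⟨U ∩ V, hU.inter hV, subset_inter hHU hHV,
      ((hdU.mono inter_subset_left).add (hdV.mono inter_subset_right))⟩,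
      ⟨C + D, fun z hz => (norm_add_le _ _).trans (add_le_add (hC z hz) (hD z hz))⟩,
      fun t => by simp [hφ t, hψ t]⟩
  smul_mem' := by
    rintro c a ⟨φ, ⟨U, hU, hHU, hdU⟩, ⟨C, hC⟩, hφ⟩
    refine ⟨c • φ, ⟨U, hU, hHU, hdU.const_smul c⟩,
      ⟨‖c‖ * C, fun z hz => by
        rw [Pi.smul_apply, norm_smul]
        exact mul_le_mul_of_nonneg_left (hC z hz) (norm_nonneg c)⟩,
      fun t => by simp [hφ t]⟩

/-- The subspace `G₊` of `x` whose local resolvent extends boundedly and analytically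
to the closed left half plane. -/
def Gp (S : E →ₗ.[ℂ] E) : Submodule ℂ E := Gsub S {z : ℂ | z.re ≤ 0}

/-- The subspace `G₋` of `x` whose local resolvent extends boundedly and analytically
to the closed right half plane. -/
def Gm (S : E →ₗ.[ℂ] E) : Submodule ℂ E := Gsub S {z : ℂ | 0 ≤ z.re}

/-- The part of the operator `S` in the subspace `Y`: the restriction of `S` to
`{x ∈ D(S) ∩ Y : S x ∈ Y}`, regarded as an operator in `Y`. If `Y` is `S`-invariant
this is the restriction `S|Y`. -/
def partIn (S : E →ₗ.[ℂ] E) (Y : Submodule ℂ E) : ↥Y →ₗ.[ℂ] ↥Y :=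
  Submodule.toLinearPMap (S.graph.comap (Y.subtype.prodMap Y.subtype))

/-- `x ∈ D(S²)`. -/
def memD2 (S : E →ₗ.[ℂ] E) (x : E) : Prop :=
  ∃ h : x ∈ S.domain, S ⟨x, h⟩ ∈ S.domain

-- `S² x` (junk value `0` if `x ∉ D(S²)`).
open Classical in
def sqApply (S : E →ₗ.[ℂ] E) (x : E) : E :=
  if h : memD2 S x then S ⟨S ⟨x, h.choose⟩, h.choose_spec⟩ else 0

/-- `S` is dichotomous with respect to the decomposition `E = Xp ⊕ Xm`. -/
structure IsDichotomousWrt (S : E →ₗ.[ℂ] E) (Xp Xm : Submodule ℂ E) : Prop where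
  closed_p : IsClosed (Xp : Set E)
  closed_m : IsClosed (Xm : Set E)
  compl : IsCompl Xp Xm
  imag : ∀ t : ℝ, (t : ℂ) * Complex.I ∈ resolvSet S
  inv_p : ∀ x : S.domain, (x : E) ∈ Xp → S x ∈ Xp
  inv_m : ∀ x : S.domain, (x : E) ∈ Xm → S x ∈ Xm
  spec_p : pSpectrum (partIn S Xp) ⊆ {lam : ℂ | 0 < lam.re}
  spec_m : pSpectrum (partIn S Xm) ⊆ {lam : ℂ | lam.re < 0}

/-- `S` is strictly dichotomous with respect to the decomposition `E = Xp ⊕ Xm`. -/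
structure IsStrictlyDichotomousWrt (S : E →ₗ.[ℂ] E) (Xp Xm : Submodule ℂ E)
    extends IsDichotomousWrt S Xp Xm : Prop where
  bnd_p : ∃ M : ℝ, ∀ lam : ℂ, lam.re ≤ 0 →
    lam ∈ resolvSet (partIn S Xp) ∧ ‖res (partIn S Xp) lam‖ ≤ M
  bnd_m : ∃ M : ℝ, ∀ lam : ℂ, 0 ≤ lam.re →
    lam ∈ resolvSet (partIn S Xm) ∧ ‖res (partIn S Xm) lam‖ ≤ M

/-- `S` is strictly dichotomous (w.r.t. some decomposition). -/
def IsStrictlyDichotomous (S : E →ₗ.[ℂ] E) : Prop :=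
  ∃ Xp Xm : Submodule ℂ E, IsStrictlyDichotomousWrt S Xp Xm

/-- `S` is bisectorial with constant `M`. -/
def Bisectorial (S : E →ₗ.[ℂ] E) (M : ℝ) : Prop :=
  0 < M ∧ ∀ lam : ℂ, lam.re = 0 → lam ≠ 0 →
    lam ∈ resolvSet S ∧ ‖res S lam‖ ≤ M / ‖lam‖

/-- `S` is almost bisectorial with constants `M` and exponent `β`. -/
def AlmostBisectorial (S : E →ₗ.[ℂ] E) (M β : ℝ) : Prop :=
  0 < M ∧ 0 < β ∧ β < 1 ∧ ∀ lam : ℂ, lam.re = 0 → lam ≠ 0 →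
    lam ∈ resolvSet S ∧ ‖res S lam‖ ≤ M / ‖lam‖ ^ β

/-- The operator `A₊ = (2πi)⁻¹ ∫_{Re lam = h} lam⁻² (S-lam)⁻¹ dlam`. -/
def Aplus (S : E →ₗ.[ℂ] E) (h : ℝ) : E →L[ℂ] E :=
  (2 * (Real.pi : ℂ))⁻¹ •
    ∫ t : ℝ, (((h : ℂ) + (t : ℂ) * Complex.I) ^ 2)⁻¹ • res S ((h : ℂ) + (t : ℂ) * Complex.I)

/-- The operator `A₋ = -(2πi)⁻¹ ∫_{Re lam = -h} lam⁻² (S-lam)⁻¹ dlam`. -/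
def Aminus (S : E →ₗ.[ℂ] E) (h : ℝ) : E →L[ℂ] E :=
  -(2 * (Real.pi : ℂ))⁻¹ •
    ∫ t : ℝ, ((-(h : ℂ) + (t : ℂ) * Complex.I) ^ 2)⁻¹ • res S (-(h : ℂ) + (t : ℂ) * Complex.I)

/-- The operator `B₊ = (2πi)⁻¹ ∫_{Re lam = h} lam⁻¹ (S-lam)⁻¹ dlam`. -/
def Bplus (S : E →ₗ.[ℂ] E) (h : ℝ) : E →L[ℂ] E :=
  (2 * (Real.pi : ℂ))⁻¹ •
    ∫ t : ℝ, ((h : ℂ) + (t : ℂ) * Complex.I)⁻¹ • res S ((h : ℂ) + (t : ℂ) * Complex.I)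

/-- The operator `B₋ = -(2πi)⁻¹ ∫_{Re lam = -h} lam⁻¹ (S-lam)⁻¹ dlam`. -/
def Bminus (S : E →ₗ.[ℂ] E) (h : ℝ) : E →L[ℂ] E :=
  -(2 * (Real.pi : ℂ))⁻¹ •
    ∫ t : ℝ, (-(h : ℂ) + (t : ℂ) * Complex.I)⁻¹ • res S (-(h : ℂ) + (t : ℂ) * Complex.I)

/-- `M₊`, the closure of the range of `A₊`. -/
def Msubp (S : E →ₗ.[ℂ] E) (h : ℝ) : Submodule ℂ E :=
  (LinearMap.range ((Aplus S h) : E →ₗ[ℂ] E)).topologicalClosure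

/-- `M₋`, the closure of the range of `A₋`. -/
def Msubm (S : E →ₗ.[ℂ] E) (h : ℝ) : Submodule ℂ E :=
  (LinearMap.range ((Aminus S h) : E →ₗ[ℂ] E)).topologicalClosure

/-! Since `0 ∈ ρ(S)`, the operator `S²` is a bijection of `D(S²)` onto `X` with bounded inverse
`R²`, where `R = S⁻¹`: a vector `y` lies in `D(S²)` with `S² y = z` exactly when `y = R² z`.
Hence the graph of `Pⱼ = S² Aⱼ` is `{(x, z) : Aⱼ x = R² z}`, which is closed because `Aⱼ` and `R²`
are bounded, and every other claim becomes an identity between bounded operators, obtained from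
`A₁ + A₂ = R²`, `AᵢAⱼ = 0`, the commutation of `Aⱼ` with `R` and the injectivity of `R`. -/

theorem isResolventAt_res {S : E →ₗ.[ℂ] E} {lam : ℂ} (h : lam ∈ resolvSet S) :
    IsResolventAt S lam (res S lam) := by
  obtain h : ∃ R, IsResolventAt S lam R := h
  rw [res, dif_pos h]
  exact h.choose_spec

namespace IsResolventAt

variable {S : E →ₗ.[ℂ] E} {R : E →L[ℂ] E}

theorem apply_resolvent (hR : IsResolventAt S 0 R) (x : E) : S ⟨R x, hR.1 x⟩ = x := by
  simpa using hR.2.2 x (hR.1 x)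

theorem resolvent_apply (hR : IsResolventAt S 0 R) (x : S.domain) : R (S x) = x := by
  simpa using hR.2.1 x

theorem injective (hR : IsResolventAt S 0 R) : Function.Injective R := fun a b hab =>
  calc a = S ⟨R a, hR.1 a⟩ := (hR.apply_resolvent a).symm
    _ = S ⟨R b, hR.1 b⟩ := congrArg S (Subtype.ext hab)
    _ = b := hR.apply_resolvent b

theorem memD2_and_sqApply_eq_iff (hR : IsResolventAt S 0 R) {y z : E} :
    memD2 S y ∧ sqApply S y = z ↔ R (R z) = y := by
  constructor
  · rintro ⟨hy, rfl⟩
    rw [sqApply, dif_pos hy, hR.resolvent_apply, hR.resolvent_apply]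
  · rintro rfl
    have hz : memD2 S (R (R z)) := ⟨hR.1 _, by rw [hR.apply_resolvent]; exact hR.1 z⟩
    refine ⟨hz, ?_⟩
    have hSz : (⟨S ⟨R (R z), hz.choose⟩, hz.choose_spec⟩ : S.domain) = ⟨R z, hR.1 z⟩ :=
      Subtype.ext (hR.apply_resolvent _)
    rw [sqApply, dif_pos hz, hSz, hR.apply_resolvent]

theorem resolvent_resolvent_sqApply (hR : IsResolventAt S 0 R) {y : E} (hy : memD2 S y) :
    R (R (sqApply S y)) = y :=
  hR.memD2_and_sqApply_eq_iff.1 ⟨hy, rfl⟩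

theorem isClosed_graph_sqApply_comp (hR : IsResolventAt S 0 R) (A : E →L[ℂ] E) :
    IsClosed {q : E × E | memD2 S (A q.1) ∧ q.2 = sqApply S (A q.1)} := by
  have hgraph : {q : E × E | memD2 S (A q.1) ∧ q.2 = sqApply S (A q.1)} =
      {q : E × E | R (R q.2) = A q.1} := by
    ext q
    simp only [Set.mem_ofPred_eq, eq_comm (a := q.2), hR.memD2_and_sqApply_eq_iff]
  rw [hgraph]
  exact isClosed_eq (by fun_prop) (by fun_prop)

theorem memD2_and_sqApply_eq_of_add (hR : IsResolventAt S 0 R) {A B : E →L[ℂ] E}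
    (hsum : ∀ x, A x + B x = R (R x)) {x : E} (hx : memD2 S (A x)) :
    memD2 S (B x) ∧ sqApply S (B x) = x - sqApply S (A x) := by
  rw [hR.memD2_and_sqApply_eq_iff, map_sub, map_sub, hR.resolvent_resolvent_sqApply hx, ← hsum]
  abel

theorem memD2_and_sqApply_idem (hR : IsResolventAt S 0 R) {A B : E →L[ℂ] E}
    (hsum : ∀ x, A x + B x = R (R x)) (hBA : ∀ x, B (A x) = 0)
    (hBR : ∀ x, B (R x) = R (B x)) {x : E} (hx : memD2 S (A x)) :
    memD2 S (A (sqApply S (A x))) ∧ sqApply S (A (sqApply S (A x))) = sqApply S (A x) := by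
  set z := sqApply S (A x)
  have hBz : B z = 0 := hR.injective <| hR.injective <| by
    rw [← hBR, ← hBR, hR.resolvent_resolvent_sqApply hx, hBA, map_zero, map_zero]
  rw [hR.memD2_and_sqApply_eq_iff, ← hsum z, hBz, add_zero]

theorem memD2_and_sqApply_comp (hR : IsResolventAt S 0 R) {A : E →L[ℂ] E}
    (hAR : ∀ x, A (R x) = R (A x)) {x : E} (hx : memD2 S x) :
    memD2 S (A x) ∧ sqApply S (A x) = A (sqApply S x) := by
  rw [hR.memD2_and_sqApply_eq_iff, ← hAR, ← hAR, hR.resolvent_resolvent_sqApply hx]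

end IsResolventAt

variable {X : Type*} [NormedAddCommGroup X] [NormedSpace ℂ X] [CompleteSpace X]

theorem statement0_general (S : X →ₗ.[ℂ] X)
    (h0 : (0 : ℂ) ∈ resolvSet S)
    (A₁ A₂ : X →L[ℂ] X)
    (hsum : ∀ x : X, A₁ x + A₂ x = res S 0 (res S 0 x))
    (h12 : ∀ x : X, A₁ (A₂ x) = 0) (h21 : ∀ x : X, A₂ (A₁ x) = 0)
    (hcomm1 : ∀ x : X, A₁ (res S 0 x) = res S 0 (A₁ x))
    (hcomm2 : ∀ x : X, A₂ (res S 0 x) = res S 0 (A₂ x)) :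
    -- P₁ and P₂ are closed (their graphs are closed)
    IsClosed {q : X × X | memD2 S (A₁ q.1) ∧ q.2 = sqApply S (A₁ q.1)} ∧
    IsClosed {q : X × X | memD2 S (A₂ q.1) ∧ q.2 = sqApply S (A₂ q.1)} ∧
    -- D(P₁) = D(P₂)
    (∀ x : X, memD2 S (A₁ x) ↔ memD2 S (A₂ x)) ∧
    -- P₁, P₂ are projections: range ⊆ domain and P ∘ P = P
    (∀ x : X, memD2 S (A₁ x) → memD2 S (A₁ (sqApply S (A₁ x))) ∧
      sqApply S (A₁ (sqApply S (A₁ x))) = sqApply S (A₁ x)) ∧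
    (∀ x : X, memD2 S (A₂ x) → memD2 S (A₂ (sqApply S (A₂ x))) ∧
      sqApply S (A₂ (sqApply S (A₂ x))) = sqApply S (A₂ x)) ∧
    -- complementary: P₁ + P₂ = I on the common domain
    (∀ x : X, memD2 S (A₁ x) → sqApply S (A₁ x) + sqApply S (A₂ x) = x) ∧
    -- D(S²) ⊆ D(P₁) = D(P₂) and Pⱼ x = Aⱼ S² x for x ∈ D(S²)
    (∀ x : X, memD2 S x → memD2 S (A₁ x) ∧ memD2 S (A₂ x) ∧
      sqApply S (A₁ x) = A₁ (sqApply S x) ∧ sqApply S (A₂ x) = A₂ (sqApply S x)) := by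
  have hR := isResolventAt_res h0
  have hsum' : ∀ x, A₂ x + A₁ x = res S 0 (res S 0 x) := fun x => by rw [add_comm, hsum]
  refine ⟨hR.isClosed_graph_sqApply_comp A₁, hR.isClosed_graph_sqApply_comp A₂,
    fun x => ⟨fun hx => (hR.memD2_and_sqApply_eq_of_add hsum hx).1,
      fun hx => (hR.memD2_and_sqApply_eq_of_add hsum' hx).1⟩,
    fun x => hR.memD2_and_sqApply_idem hsum h21 hcomm2,
    fun x => hR.memD2_and_sqApply_idem hsum' h12 hcomm1, fun x hx => ?_, fun x hx => ?_⟩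
  · rw [(hR.memD2_and_sqApply_eq_of_add hsum hx).2, add_sub_cancel]
  · obtain ⟨hx₁, hP₁⟩ := hR.memD2_and_sqApply_comp hcomm1 hx
    obtain ⟨hx₂, hP₂⟩ := hR.memD2_and_sqApply_comp hcomm2 hx
    exact ⟨hx₁, hx₂, hP₁, hP₂⟩

/-- the operators `Pⱼ = S² Aⱼ` are closed complementary projections,
`D(S²) ⊆ D(P₁) = D(P₂)` and `Pⱼ x = Aⱼ S² x` on `D(S²)`. -/
theorem statement0 (S : X →ₗ.[ℂ] X)
    (hclosed : IsClosed (S.graph : Set (X × X)))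
    (h0 : (0 : ℂ) ∈ resolvSet S)
    (A₁ A₂ : X →L[ℂ] X)
    (hsum : ∀ x : X, A₁ x + A₂ x = res S 0 (res S 0 x))
    (h12 : ∀ x : X, A₁ (A₂ x) = 0) (h21 : ∀ x : X, A₂ (A₁ x) = 0)
    (hcomm1 : ∀ x : X, A₁ (res S 0 x) = res S 0 (A₁ x))
    (hcomm2 : ∀ x : X, A₂ (res S 0 x) = res S 0 (A₂ x)) :
    -- P₁ and P₂ are closed (their graphs are closed)
    IsClosed {q : X × X | memD2 S (A₁ q.1) ∧ q.2 = sqApply S (A₁ q.1)} ∧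
    IsClosed {q : X × X | memD2 S (A₂ q.1) ∧ q.2 = sqApply S (A₂ q.1)} ∧
    -- D(P₁) = D(P₂)
    (∀ x : X, memD2 S (A₁ x) ↔ memD2 S (A₂ x)) ∧
    -- P₁, P₂ are projections: range ⊆ domain and P ∘ P = P
    (∀ x : X, memD2 S (A₁ x) → memD2 S (A₁ (sqApply S (A₁ x))) ∧
      sqApply S (A₁ (sqApply S (A₁ x))) = sqApply S (A₁ x)) ∧
    (∀ x : X, memD2 S (A₂ x) → memD2 S (A₂ (sqApply S (A₂ x))) ∧
      sqApply S (A₂ (sqApply S (A₂ x))) = sqApply S (A₂ x)) ∧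
    -- complementary: P₁ + P₂ = I on the common domain
    (∀ x : X, memD2 S (A₁ x) → sqApply S (A₁ x) + sqApply S (A₂ x) = x) ∧
    -- D(S²) ⊆ D(P₁) = D(P₂) and Pⱼ x = Aⱼ S² x for x ∈ D(S²)
    (∀ x : X, memD2 S x → memD2 S (A₁ x) ∧ memD2 S (A₂ x) ∧
      sqApply S (A₁ x) = A₁ (sqApply S x) ∧ sqApply S (A₂ x) = A₂ (sqApply S x)) :=
  statement0_general S h0 A₁ A₂ hsum h12 h21 hcomm1 hcomm2

end
end

section
/- Let S be an almost bisectorial operator on X with constants M > 0 and 0 < β < 1, i.e. ‖(S − λ)⁻¹‖ ≤ M/|λ|^β for all λ ∈ iℝ ∖ {0}. Then for every 0 < α < 1/M the parabola-shaped region Ω = {a + ib ∈ ℂ ∖ {0} : a, b ∈ ℝ, |a| ≤ α|b|^β} is contained in ρ(S), and there exists M' > 0 such that ‖(S − λ)⁻¹‖ ≤ M'/|λ|^β for all λ ∈ Ω. -/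
open Complex MeasureTheory Set Filter

noncomputable section

variable {E : Type*} [NormedAddCommGroup E] [NormedSpace ℂ E]

variable {X : Type*} [NormedAddCommGroup X] [NormedSpace ℂ X] [CompleteSpace X]


/-! A point `lam` at distance `d` from a resolvent point `μ` is again a resolvent point as soon
as `d ‖R(μ)‖ < 1` (Neumann series), with `‖R(lam)‖ ≤ ‖R(μ)‖ / (1 - d ‖R(μ)‖)`. Near `0` compare
`lam` with `μ = i ‖lam‖`: then `d ‖R(μ)‖ ≤ 2M ‖lam‖^(1-β)`, which is small because `β < 1`.
Elsewhere compare with `μ = i Im lam`: then `d ‖R(μ)‖ ≤ |Re lam| M / |Im lam|^β ≤ αM < 1`, and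
away from `0` the ratio `‖lam‖ / |Im lam|` is bounded on the parabolic region. -/

namespace IsResolventAt

variable {S : E →ₗ.[ℂ] E} {μ lam : ℂ} {R : E →L[ℂ] E}

theorem unique {R' : E →L[ℂ] E} (h : IsResolventAt S lam R) (h' : IsResolventAt S lam R') :
    R = R' := by
  ext x
  simpa [h.2.2 x (h.1 x)] using (h'.2.1 ⟨R x, h.1 x⟩).symm

theorem res_eq (h : IsResolventAt S lam R) : res S lam = R := by
  have hex : ∃ R, IsResolventAt S lam R := ⟨R, h⟩
  rw [res, dif_pos hex]
  exact hex.choose_spec.unique h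

/-- `S - lam = (S - μ) (1 - (lam - μ) R(μ))`, so `R(lam) = R(μ) u⁻¹` whenever
`u = 1 - (lam - μ) R(μ)` is invertible. -/
theorem mul_units_inv (hR : IsResolventAt S μ R) (u : (E →L[ℂ] E)ˣ)
    (hu : (u : E →L[ℂ] E) = 1 - (lam - μ) • R) : IsResolventAt S lam (R * ↑u⁻¹) := by
  have hcomm : Commute (↑u⁻¹ : E →L[ℂ] E) R :=
    (hu ▸ (Commute.one_left R).sub_left ((Commute.refl R).smul_left _)).units_inv_left
  have hu_apply : ∀ y, (u : E →L[ℂ] E) y = y - (lam - μ) • R y := fun y => by simp [hu]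
  have hsub : ∀ (y z : E), z - lam • y = (z - μ • y) - (lam - μ) • y := fun y z => by module
  refine ⟨fun x => hR.1 _, fun x => ?_, fun x hx => ?_⟩
  · calc (R * ↑u⁻¹) (S x - lam • (x : E))
        = (↑u⁻¹ : E →L[ℂ] E) (R (S x - μ • (x : E)) - (lam - μ) • R x) := by
          rw [← hcomm.eq, mul_apply_eq_comp, hsub, map_sub, map_smul]
      _ = x := by
          rw [hR.2.1 x, ← hu_apply, ← mul_apply_eq_comp, Units.inv_mul,
            one_apply_eq_self]
  · calc S ⟨(R * ↑u⁻¹) x, hx⟩ - lam • (R * ↑u⁻¹) x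
        = (u : E →L[ℂ] E) ((↑u⁻¹ : E →L[ℂ] E) x) := by
          rw [hsub, hu_apply]
          exact congrArg (· - _) (hR.2.2 _ hx)
      _ = x := by
          rw [← mul_apply_eq_comp, Units.mul_inv, one_apply_eq_self]

end IsResolventAt

theorem norm_units_oneSub_inv_le {A : Type*} [NormedRing A] [HasSummableGeomSeries A]
    (h1 : ‖(1 : A)‖ ≤ 1) (t : A) (ht : ‖t‖ < 1) :
    ‖(↑(Units.oneSub t ht)⁻¹ : A)‖ ≤ (1 - ‖t‖)⁻¹ := by
  have := tsum_geometric_le_of_norm_lt_one t ht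
  simp only [Units.oneSub, Units.inv_mk]
  linarith

theorem IsResolventAt.mem_resolvSet_and_norm_res_le {S : X →ₗ.[ℂ] X} {μ : ℂ} {R : X →L[ℂ] X}
    (hR : IsResolventAt S μ R) {lam : ℂ} (h : ‖lam - μ‖ * ‖R‖ < 1) :
    lam ∈ resolvSet S ∧ ‖res S lam‖ ≤ ‖R‖ / (1 - ‖lam - μ‖ * ‖R‖) := by
  have hsmall : ‖(lam - μ) • R‖ < 1 := (norm_smul_le _ _).trans_lt h
  set u := Units.oneSub _ hsmall
  have hres := hR.mul_units_inv u rfl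
  refine ⟨⟨_, hres⟩, ?_⟩
  rw [hres.res_eq, div_eq_mul_inv]
  calc ‖R * ↑u⁻¹‖ ≤ ‖R‖ * ‖(↑u⁻¹ : X →L[ℂ] X)‖ := norm_mul_le _ _
    _ ≤ ‖R‖ * (1 - ‖(lam - μ) • R‖)⁻¹ := by
      gcongr
      exact norm_units_oneSub_inv_le ContinuousLinearMap.norm_id_le _ hsmall
    _ ≤ ‖R‖ * (1 - ‖lam - μ‖ * ‖R‖)⁻¹ := by
      gcongr
      exact norm_smul_le (lam - μ) R

open Topology

theorem mem_resolvSet_and_norm_res_le_of_norm_sub_mul_le {S : X →ₗ.[ℂ] X} {μ lam : ℂ} {B q : ℝ}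
    (hμ : μ ∈ resolvSet S) (hB : ‖res S μ‖ ≤ B) (hq : ‖lam - μ‖ * B ≤ q) (hq1 : q < 1) :
    lam ∈ resolvSet S ∧ ‖res S lam‖ ≤ B / (1 - q) := by
  obtain ⟨R, hR⟩ := hμ
  rw [hR.res_eq] at hB
  have hRq : ‖lam - μ‖ * ‖R‖ ≤ q := (mul_le_mul_of_nonneg_left hB (norm_nonneg _)).trans hq
  obtain ⟨hmem, hle⟩ := hR.mem_resolvSet_and_norm_res_le (hRq.trans_lt hq1)
  exact ⟨hmem, hle.trans (div_le_div₀ ((norm_nonneg _).trans hB) hB (by linarith) (by linarith))⟩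

theorem Complex.im_ne_zero_of_abs_re_le_mul_rpow {α β : ℝ} (hβ : 0 < β) {lam : ℂ}
    (hlam : lam ≠ 0) (hre : |lam.re| ≤ α * |lam.im| ^ β) : lam.im ≠ 0 := by
  intro him
  rw [him, abs_zero, Real.zero_rpow hβ.ne', mul_zero, abs_nonpos_iff] at hre
  exact hlam (Complex.ext hre him)

theorem Complex.exists_norm_le_mul_abs_im {α β δ : ℝ} (hα : 0 ≤ α) (hβ0 : 0 < β) (hβ1 : β ≤ 1)
    (hδ : 0 < δ) : ∃ K : ℝ, ∀ lam : ℂ, δ ≤ ‖lam‖ → |lam.re| ≤ α * |lam.im| ^ β →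
      ‖lam‖ ≤ K * |lam.im| := by
  have hcont : Continuous fun y : ℝ => α * |y| ^ β + |y| := by
    have := Real.continuous_rpow_const hβ0.le
    fun_prop
  have hnear : ∀ᶠ y in 𝓝 (0 : ℝ), α * |y| ^ β + |y| < δ := by
    refine (hcont.tendsto 0).eventually (eventually_lt_nhds ?_)
    simpa [Real.zero_rpow hβ0.ne'] using hδ
  obtain ⟨s, hs, hs_lt⟩ := Metric.eventually_nhds_iff.1 hnear
  refine ⟨α * s ^ (β - 1) + 1, fun lam hlam hre => ?_⟩
  have hnorm : ‖lam‖ ≤ α * |lam.im| ^ β + |lam.im| :=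
    (Complex.norm_le_abs_re_add_abs_im lam).trans (by linarith)
  have hsim : s ≤ |lam.im| := by
    by_contra! h
    have := hs_lt (y := lam.im) (by simpa using h)
    linarith
  have hpow : |lam.im| ^ β ≤ s ^ (β - 1) * |lam.im| := by
    calc |lam.im| ^ β = |lam.im| ^ (β - 1) * |lam.im| := by
          rw [← Real.rpow_add_one (hs.trans_le hsim).ne', sub_add_cancel]
      _ ≤ s ^ (β - 1) * |lam.im| :=
          mul_le_mul_of_nonneg_right (Real.rpow_le_rpow_of_nonpos hs hsim (by linarith))
            (abs_nonneg _)
  calc ‖lam‖ ≤ α * (s ^ (β - 1) * |lam.im|) + |lam.im| := hnorm.trans (by gcongr)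
    _ = (α * s ^ (β - 1) + 1) * |lam.im| := by ring

namespace AlmostBisectorial

variable {S : X →ₗ.[ℂ] X} {M β : ℝ}

theorem exists_norm_res_le_near_zero (hS : AlmostBisectorial S M β) :
    ∃ δ > 0, ∀ lam : ℂ, lam ≠ 0 → ‖lam‖ < δ →
      lam ∈ resolvSet S ∧ ‖res S lam‖ ≤ 2 * M / ‖lam‖ ^ β := by
  obtain ⟨hM, hβ0, hβ1, hres⟩ := hS
  have hcont : Continuous fun r : ℝ => 2 * M * r ^ (1 - β) := by
    have := Real.continuous_rpow_const (by linarith : 0 ≤ 1 - β)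
    fun_prop
  have hnear : ∀ᶠ r in 𝓝 (0 : ℝ), 2 * M * r ^ (1 - β) ≤ 1 / 2 := by
    refine (hcont.tendsto 0).eventually (eventually_le_nhds ?_)
    simp [Real.zero_rpow (by linarith : 1 - β ≠ 0)]
  obtain ⟨δ, hδ, hδ_le⟩ := Metric.eventually_nhds_iff.1 hnear
  refine ⟨δ, hδ, fun lam hlam hlamδ => ?_⟩
  have hpos : 0 < ‖lam‖ := norm_pos_iff.2 hlam
  set μ : ℂ := (‖lam‖ : ℂ) * Complex.I
  have hμ : ‖μ‖ = ‖lam‖ := by simp [μ]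
  obtain ⟨hμρ, hμB⟩ := hres μ (by simp [μ]) (by rw [← norm_pos_iff, hμ]; exact hpos)
  rw [hμ] at hμB
  have hq : ‖lam - μ‖ * (M / ‖lam‖ ^ β) ≤ 1 / 2 := by
    calc ‖lam - μ‖ * (M / ‖lam‖ ^ β) ≤ 2 * ‖lam‖ * (M / ‖lam‖ ^ β) := by
          gcongr
          exact (norm_sub_le _ _).trans (by rw [hμ, two_mul])
      _ = 2 * M * ‖lam‖ ^ (1 - β) := by
          rw [Real.rpow_sub hpos, Real.rpow_one]
          ring
      _ ≤ 1 / 2 := hδ_le (by simpa using hlamδ)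
  convert mem_resolvSet_and_norm_res_le_of_norm_sub_mul_le hμρ hμB hq one_half_lt_one using 2
  ring

theorem mem_resolvSet_and_norm_res_le_of_abs_re_le (hS : AlmostBisectorial S M β) {α : ℝ}
    (hαM : α * M < 1) {lam : ℂ} (hlam : lam ≠ 0) (hre : |lam.re| ≤ α * |lam.im| ^ β) :
    lam ∈ resolvSet S ∧ ‖res S lam‖ ≤ M / |lam.im| ^ β / (1 - α * M) := by
  obtain ⟨hM, hβ0, -, hres⟩ := hS
  have him := Complex.im_ne_zero_of_abs_re_le_mul_rpow hβ0 hlam hre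
  set μ : ℂ := (lam.im : ℂ) * Complex.I
  have hμ : ‖μ‖ = |lam.im| := by simp [μ]
  obtain ⟨hμρ, hμB⟩ := hres μ (by simp [μ]) (by rw [← norm_pos_iff, hμ]; exact abs_pos.2 him)
  rw [hμ] at hμB
  have hdist : ‖lam - μ‖ = |lam.re| := by
    rw [show lam - μ = (lam.re : ℂ) by apply Complex.ext <;> simp [μ], Complex.norm_real,
      Real.norm_eq_abs]
  have hq : ‖lam - μ‖ * (M / |lam.im| ^ β) ≤ α * M := by
    have hpow : 0 < |lam.im| ^ β := Real.rpow_pos_of_pos (abs_pos.2 him) β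
    calc ‖lam - μ‖ * (M / |lam.im| ^ β) ≤ α * |lam.im| ^ β * (M / |lam.im| ^ β) := by
          rw [hdist]; gcongr
      _ = α * M := by field_simp
  exact mem_resolvSet_and_norm_res_le_of_norm_sub_mul_le hμρ hμB hq hαM

theorem norm_res_le_of_norm_le_mul_abs_im (hS : AlmostBisectorial S M β) {α K : ℝ}
    (hαM : α * M < 1) {lam : ℂ} (hlam : lam ≠ 0) (hre : |lam.re| ≤ α * |lam.im| ^ β)
    (hK : ‖lam‖ ≤ K * |lam.im|) : ‖res S lam‖ ≤ M * K ^ β / (1 - α * M) / ‖lam‖ ^ β := by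
  obtain ⟨hM, hβ, -⟩ := id hS
  have him_pos : 0 < |lam.im| := abs_pos.2 (Complex.im_ne_zero_of_abs_re_le_mul_rpow hβ hlam hre)
  have hK0 : 0 ≤ K := nonneg_of_mul_nonneg_left ((norm_nonneg _).trans hK) him_pos
  have hpow : ‖lam‖ ^ β ≤ K ^ β * |lam.im| ^ β :=
    (Real.rpow_le_rpow (norm_nonneg _) hK hβ.le).trans_eq (Real.mul_rpow hK0 him_pos.le)
  have hinv : 1 / |lam.im| ^ β ≤ K ^ β / ‖lam‖ ^ β := by
    rw [div_le_div_iff₀ (by positivity) (by positivity)]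
    linarith
  calc ‖res S lam‖ ≤ M / |lam.im| ^ β / (1 - α * M) :=
        (hS.mem_resolvSet_and_norm_res_le_of_abs_re_le hαM hlam hre).2
    _ = M / (1 - α * M) * (1 / |lam.im| ^ β) := by ring
    _ ≤ M / (1 - α * M) * (K ^ β / ‖lam‖ ^ β) := by gcongr
    _ = M * K ^ β / (1 - α * M) / ‖lam‖ ^ β := by ring

end AlmostBisectorial

/-- the resolvent set of an almost bisectorial operator contains a
parabola shaped region around the imaginary axis, with the same resolvent decay. -/
theorem statement11 (S : X →ₗ.[ℂ] X) (M β : ℝ) (hab : AlmostBisectorial S M β) :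
    ∀ α : ℝ, 0 < α → α < 1 / M →
      (∀ lam : ℂ, lam ≠ 0 → |lam.re| ≤ α * |lam.im| ^ β → lam ∈ resolvSet S) ∧
      ∃ M' : ℝ, 0 < M' ∧ ∀ lam : ℂ, lam ≠ 0 → |lam.re| ≤ α * |lam.im| ^ β →
        ‖res S lam‖ ≤ M' / ‖lam‖ ^ β := by
  intro α hα hαM
  obtain ⟨hM, hβ0, hβ1, -⟩ := id hab
  have hαM1 : α * M < 1 := (lt_div_iff₀ hM).1 hαM
  refine ⟨fun lam hlam hre =>
    (hab.mem_resolvSet_and_norm_res_le_of_abs_re_le hαM1 hlam hre).1, ?_⟩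
  obtain ⟨δ, hδ, hnear⟩ := hab.exists_norm_res_le_near_zero
  obtain ⟨K, hK⟩ := Complex.exists_norm_le_mul_abs_im hα.le hβ0 hβ1.le hδ
  refine ⟨max (2 * M) (M * K ^ β / (1 - α * M)), by positivity, fun lam hlam hre => ?_⟩
  rcases lt_or_ge ‖lam‖ δ with hsmall | hlarge
  · exact (hnear lam hlam hsmall).2.trans (by gcongr; exact le_max_left _ _)
  · exact (hab.norm_res_le_of_norm_le_mul_abs_im hαM1 hlam hre (hK lam hlarge hre)).trans (by gcongr; exact le_max_right _ _)

end
end
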